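/- If n is a natural number with 2 ≤ n, then for every ordinal γ the γ-fold iterated Hessenberg product of n equals the ordinal power n^γ, i.e. n^{⊙γ} = n^γ. -/

import Mathlib

universe u

/-- Natural (Hessenberg) addition, as `Ordinal.nadd` in the older Mathlib. -/
noncomputable def Ordinal.nadd (a b : Ordinal.{u}) : Ordinal.{u} :=
  max (⨆ x : Set.Iio a, Order.succ (Ordinal.nadd x.1 b))
    (⨆ x : Set.Iio b, Order.succ (Ordinal.nadd a x.1))
termination_by (a, b)
decreasing_by
  · exact Prod.Lex.left _ _ x.2
  · exact Prod.Lex.right _ x.2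

/-- Natural (Hessenberg) multiplication, as `Ordinal.nmul` in the older Mathlib. -/
noncomputable def Ordinal.nmul (a b : Ordinal.{u}) : Ordinal.{u} :=
  sInf {c | ∀ a' < a, ∀ b' < b,
    Ordinal.nadd (Ordinal.nmul a' b) (Ordinal.nmul a b') < Ordinal.nadd c (Ordinal.nmul a' b')}
termination_by (a, b)
decreasing_by
  · exact Prod.Lex.left _ _ ‹_›
  · exact Prod.Lex.right _ ‹_›
  · exact Prod.Lex.left _ _ ‹_›

/-- The `β`-fold iterated Hessenberg (natural) product of `α`:
`α^{⊙0} = 1`, `α^{⊙(β+1)} = α^{⊙β} ⊙ α`, and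
`α^{⊙λ} = sup_{β<λ} α^{⊙β}` for `λ` a limit ordinal. -/
noncomputable def iterNmul (α β : Ordinal) : Ordinal :=
  Ordinal.limitRecOn β 1 (fun _ ih => Ordinal.nmul ih α)
    (fun b _ ih => ⨆ γ : Set.Iio b, ih γ.1 γ.2)

/-! Writing `γ = ω * δ + k` with `k` finite gives `n ^ γ = ω ^ δ * n ^ k`, so every power of `n`
is a monomial `ω ^ δ * c` with finite `c`. Below `ω ^ δ` natural sums stay below `ω ^ δ`, hence
`ω ^ δ * b ♯ x = ω ^ δ * b + x` for `x < ω ^ δ` and `ω ^ δ * b ♯ ω ^ δ = ω ^ δ * (b + 1)`; this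
closure and these identities are proved together by induction on `δ`. On monomials `⨳ m` is then
ordinary multiplication by `m`, so `n ^ γ ⨳ n = n ^ (γ + 1)`: both sides of the theorem obey the
same recursion, continuity of `n ^ ·` giving the limit step. -/

open Ordinal Order

infixl:65 " ♯ " => Ordinal.nadd
infixl:70 " ⨳ " => Ordinal.nmul

namespace Ordinal

variable {a b c : Ordinal.{u}}

theorem nadd_le_iff : a ♯ b ≤ c ↔ (∀ a' < a, a' ♯ b < c) ∧ ∀ b' < b, a ♯ b' < c := by
  rw [nadd, max_le_iff, Ordinal.iSup_le_iff, Ordinal.iSup_le_iff]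
  simp only [Order.succ_le_iff, Subtype.forall, Set.mem_Iio]

theorem lt_nadd_iff : a < b ♯ c ↔ (∃ b' < b, a ≤ b' ♯ c) ∨ ∃ c' < c, a ≤ b ♯ c' := by
  rw [← not_le, nadd_le_iff]
  simp only [not_and_or, not_forall, not_lt, exists_prop]

theorem nadd_lt_nadd_left (h : b < c) (a : Ordinal.{u}) : a ♯ b < a ♯ c :=
  (nadd_le_iff.1 le_rfl).2 b h

theorem nadd_lt_nadd_right (h : b < c) (a : Ordinal.{u}) : b ♯ a < c ♯ a :=
  (nadd_le_iff.1 le_rfl).1 b h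

theorem nadd_le_nadd_left (h : b ≤ c) (a : Ordinal.{u}) : a ♯ b ≤ a ♯ c :=
  StrictMono.monotone (fun _ _ h ↦ nadd_lt_nadd_left h a) h

theorem nadd_le_nadd_right (h : b ≤ c) (a : Ordinal.{u}) : b ♯ a ≤ c ♯ a :=
  StrictMono.monotone (fun _ _ h ↦ nadd_lt_nadd_right h a) h

theorem le_self_nadd : a ≤ a ♯ b :=
  StrictMono.le_apply (f := (· ♯ b)) fun _ _ h ↦ nadd_lt_nadd_right h b

theorem lt_of_nadd_lt_nadd_right (h : a ♯ c < b ♯ c) : a < b :=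
  lt_of_not_ge fun hba ↦ (nadd_le_nadd_right hba c).not_gt h

theorem nadd_lt_nadd {d : Ordinal.{u}} (h₁ : a < b) (h₂ : c < d) : a ♯ c < b ♯ d :=
  (nadd_lt_nadd_right h₁ c).trans (nadd_lt_nadd_left h₂ b)

theorem nadd_comm (a b : Ordinal.{u}) : a ♯ b = b ♯ a := by
  suffices ∀ a b : Ordinal.{u}, a ♯ b ≤ b ♯ a from le_antisymm (this a b) (this b a)
  intro a b
  induction a using WellFoundedLT.induction generalizing b with | ind a IHa =>
  induction b using WellFoundedLT.induction with | ind b IHb =>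
  exact nadd_le_iff.2 ⟨fun a' ha' ↦ (IHa a' ha' b).trans_lt (nadd_lt_nadd_left ha' b),
    fun b' hb' ↦ (IHb b' hb').trans_lt (nadd_lt_nadd_right hb' a)⟩

@[simp]
theorem nadd_zero (a : Ordinal.{u}) : a ♯ 0 = a := by
  induction a using WellFoundedLT.induction with | ind a IH =>
  refine le_antisymm (nadd_le_iff.2 ⟨fun a' ha' ↦ ?_, fun b' hb' ↦ by simp at hb'⟩)
    le_self_nadd
  rwa [IH a' ha']

@[simp]
theorem zero_nadd (a : Ordinal.{u}) : 0 ♯ a = a := by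
  rw [nadd_comm, nadd_zero]

theorem nadd_assoc_le (a b c : Ordinal.{u}) : a ♯ b ♯ c ≤ a ♯ (b ♯ c) := by
  induction a using WellFoundedLT.induction generalizing b c with | ind a IHa =>
  induction b using WellFoundedLT.induction generalizing c with | ind b IHb =>
  induction c using WellFoundedLT.induction with | ind c IHc =>
  refine nadd_le_iff.2 ⟨fun d hd ↦ ?_, fun c' hc' ↦
    (IHc c' hc').trans_lt (nadd_lt_nadd_left (nadd_lt_nadd_left hc' b) a)⟩
  rcases lt_nadd_iff.1 hd with ⟨a', ha', hle⟩ | ⟨b', hb', hle⟩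
  · exact ((nadd_le_nadd_right hle c).trans (IHa a' ha' b c)).trans_lt
      (nadd_lt_nadd_right ha' _)
  · exact ((nadd_le_nadd_right hle c).trans (IHb b' hb' c)).trans_lt
      (nadd_lt_nadd_left (nadd_lt_nadd_right hb' c) a)

theorem nadd_assoc (a b c : Ordinal.{u}) : a ♯ b ♯ c = a ♯ (b ♯ c) := by
  refine le_antisymm (nadd_assoc_le a b c) ?_
  calc a ♯ (b ♯ c) = c ♯ b ♯ a := by rw [nadd_comm b c, nadd_comm a (c ♯ b)]
    _ ≤ c ♯ (b ♯ a) := nadd_assoc_le c b a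
    _ = a ♯ b ♯ c := by rw [nadd_comm b a, nadd_comm c (a ♯ b)]

instance : Std.Associative nadd.{u} := ⟨nadd_assoc⟩

instance : Std.Commutative nadd.{u} := ⟨nadd_comm⟩

theorem add_nadd_le (a b c : Ordinal.{u}) : a + (b ♯ c) ≤ (a + b) ♯ c := by
  induction b using WellFoundedLT.induction generalizing c with | ind b IHb =>
  induction c using WellFoundedLT.induction with | ind c IHc =>
  refine le_of_forall_lt fun x hx ↦ ?_
  rcases lt_or_ge x a with hxa | hxa
  · exact hxa.trans_le (le_self_add.trans le_self_nadd)
  obtain ⟨t, rfl⟩ := le_iff_exists_add.1 hxa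
  rcases lt_nadd_iff.1 (lt_of_add_lt_add_left hx) with ⟨b', hb', hle⟩ | ⟨c', hc', hle⟩
  · exact ((add_le_add_right hle a).trans (IHb b' hb' c)).trans_lt
      (nadd_lt_nadd_right (add_lt_add_right hb' a) c)
  · exact ((add_le_add_right hle a).trans (IHc c' hc')).trans_lt (nadd_lt_nadd_left hc' _)

theorem add_le_nadd (a b : Ordinal.{u}) : a + b ≤ a ♯ b := by
  simpa using add_nadd_le a 0 b

theorem nmul_nadd_lt {a' b' : Ordinal.{u}} (ha : a' < a) (hb : b' < b) :
    a' ⨳ b ♯ a ⨳ b' < a ⨳ b ♯ a' ⨳ b' := by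
  have hne : {c : Ordinal.{u} | ∀ a' < a, ∀ b' < b, a' ⨳ b ♯ a ⨳ b' < c ♯ a' ⨳ b'}.Nonempty := by
    obtain ⟨M, hM⟩ := (Ordinal.bddAbove_of_small :
      BddAbove (Set.range fun p : Set.Iio a × Set.Iio b ↦ p.1.1 ⨳ b ♯ a ⨳ p.2.1))
    exact ⟨succ M, fun a' ha' b' hb' ↦
      (lt_succ_of_le (hM ⟨(⟨a', ha'⟩, ⟨b', hb'⟩), rfl⟩)).trans_le le_self_nadd⟩
  have h := csInf_mem hne
  rw [← nmul] at h
  exact h a' ha b' hb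

theorem nmul_le_iff : a ⨳ b ≤ c ↔ ∀ a' < a, ∀ b' < b, a' ⨳ b ♯ a ⨳ b' < c ♯ a' ⨳ b' := by
  refine ⟨fun h a' ha b' hb ↦ (nmul_nadd_lt ha hb).trans_le (nadd_le_nadd_right h _), fun h ↦ ?_⟩
  rw [nmul]
  exact csInf_le' h

theorem lt_nmul_iff : c < a ⨳ b ↔ ∃ a' < a, ∃ b' < b, c ♯ a' ⨳ b' ≤ a' ⨳ b ♯ a ⨳ b' := by
  rw [← not_le, nmul_le_iff]
  simp only [not_forall, not_lt, exists_prop]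

@[simp]
theorem nmul_zero (a : Ordinal.{u}) : a ⨳ 0 = 0 :=
  le_antisymm (nmul_le_iff.2 fun _ _ b' hb' ↦ by simp at hb') zero_le

theorem nmul_add_one (a b : Ordinal.{u}) : a ⨳ (b + 1) = a ⨳ b ♯ a := by
  induction a using WellFoundedLT.induction generalizing b with | ind a IHa =>
  induction b using WellFoundedLT.induction with | ind b IHb =>
  apply le_antisymm
  · refine nmul_le_iff.2 fun a' ha' b' hb' ↦ ?_
    rw [IHa a' ha' b]
    rcases (lt_add_one_iff.1 hb').lt_or_eq with hb | rfl
    · calc a' ⨳ b ♯ a' ♯ a ⨳ b' = a' ⨳ b ♯ a ⨳ b' ♯ a' := by ac_rfl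
        _ < a ⨳ b ♯ a' ⨳ b' ♯ a := nadd_lt_nadd (nmul_nadd_lt ha' hb) ha'
        _ = a ⨳ b ♯ a ♯ a' ⨳ b' := by ac_rfl
    · calc a' ⨳ b' ♯ a' ♯ a ⨳ b' = a ⨳ b' ♯ a' ⨳ b' ♯ a' := by ac_rfl
        _ < a ⨳ b' ♯ a' ⨳ b' ♯ a := nadd_lt_nadd_left ha' _
        _ = a ⨳ b' ♯ a ♯ a' ⨳ b' := by ac_rfl
  · refine nadd_le_iff.2 ⟨fun d hd ↦ ?_, fun a' ha' ↦ ?_⟩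
    · obtain ⟨a', ha', b', hb', hle⟩ := lt_nmul_iff.1 hd
      have key := nmul_nadd_lt ha' (lt_add_one_iff.2 (add_one_le_of_lt hb'))
      rw [IHa a' ha', IHb b' hb', IHa a' ha'] at key
      refine lt_of_nadd_lt_nadd_right (c := a' ⨳ b' ♯ a') (lt_of_le_of_lt ?_ key)
      calc d ♯ a ♯ (a' ⨳ b' ♯ a') = d ♯ a' ⨳ b' ♯ (a ♯ a') := by ac_rfl
        _ ≤ a' ⨳ b ♯ a ⨳ b' ♯ (a ♯ a') := nadd_le_nadd_right hle _
        _ = a' ⨳ b ♯ a' ♯ (a ⨳ b' ♯ a) := by ac_rfl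
    · have key := nmul_nadd_lt ha' (lt_add_one b)
      rw [IHa a' ha'] at key
      refine lt_of_nadd_lt_nadd_right (c := a' ⨳ b) (lt_of_eq_of_lt ?_ key)
      ac_rfl

theorem exists_mul_add_eq_of_lt_mul {u c b : Ordinal} (h : u < c * b) :
    ∃ q < b, ∃ s < c, c * q + s = u := by
  have hc : c ≠ 0 := by
    rintro rfl
    simp at h
  exact ⟨u / c, (lt_mul_iff_div_lt hc).1 h, u % c, mod_lt u hc, div_add_mod u c⟩

section PrincipalOmega0Opow

variable {e : Ordinal.{u}}

theorem omega0_opow_mul_nadd_le (hS : IsPrincipal (· ♯ ·) (ω ^ e)) (b : Ordinal.{u})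
    {x : Ordinal.{u}} (hx : x < ω ^ e) : ω ^ e * b ♯ x ≤ ω ^ e * b + x := by
  induction b using WellFoundedLT.induction generalizing x with | ind b IHb =>
  induction x using WellFoundedLT.induction with | ind x IHx =>
  refine nadd_le_iff.2 ⟨fun u hu ↦ ?_, fun x' hx' ↦ ?_⟩
  · obtain ⟨q, hq, s, hs, rfl⟩ := exists_mul_add_eq_of_lt_mul hu
    calc (ω ^ e * q + s) ♯ x ≤ ω ^ e * q ♯ s ♯ x := nadd_le_nadd_right (add_le_nadd _ _) x
      _ = ω ^ e * q ♯ (s ♯ x) := nadd_assoc _ _ _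
      _ ≤ ω ^ e * q + (s ♯ x) := IHb q hq (hS hs hx)
      _ < ω ^ e * q + ω ^ e := add_lt_add_right (hS hs hx) _
      _ = ω ^ e * (q + 1) := (mul_add_one _ _).symm
      _ ≤ ω ^ e * b := mul_le_mul_right (add_one_le_of_lt hq) _
      _ ≤ ω ^ e * b + x := le_self_add
  · exact (IHx x' hx' (hx'.trans hx)).trans_lt (add_lt_add_right hx' _)

theorem omega0_opow_mul_nadd (hS : IsPrincipal (· ♯ ·) (ω ^ e)) (b : Ordinal.{u})
    {x : Ordinal.{u}} (hx : x < ω ^ e) : ω ^ e * b ♯ x = ω ^ e * b + x :=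
  le_antisymm (omega0_opow_mul_nadd_le hS b hx) (add_le_nadd _ _)

theorem omega0_opow_mul_nadd_omega0_opow (hS : IsPrincipal (· ♯ ·) (ω ^ e)) (b : Ordinal.{u}) :
    ω ^ e * b ♯ ω ^ e = ω ^ e * (b + 1) := by
  induction b using WellFoundedLT.induction with | ind b IH =>
  refine le_antisymm (nadd_le_iff.2 ⟨fun u hu ↦ ?_, fun x hx ↦ ?_⟩) ?_
  · obtain ⟨q, hq, s, hs, rfl⟩ := exists_mul_add_eq_of_lt_mul hu
    calc (ω ^ e * q + s) ♯ ω ^ e ≤ ω ^ e * q ♯ s ♯ ω ^ e :=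
          nadd_le_nadd_right (add_le_nadd _ _) _
      _ = ω ^ e * q ♯ ω ^ e ♯ s := by ac_rfl
      _ = ω ^ e * (q + 1) + s := by rw [IH q hq, omega0_opow_mul_nadd hS _ hs]
      _ < ω ^ e * (q + 1) + ω ^ e := add_lt_add_right hs _
      _ = ω ^ e * (q + 1 + 1) := (mul_add_one _ _).symm
      _ ≤ ω ^ e * (b + 1) := mul_le_mul_right (add_le_add_left (add_one_le_of_lt hq) 1) _
  · rw [omega0_opow_mul_nadd hS b hx, mul_add_one]
    exact add_lt_add_right hx _
  · rw [mul_add_one]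
    exact add_le_nadd _ _

theorem omega0_opow_mul_nadd_omega0_opow_mul_natCast (hS : IsPrincipal (· ♯ ·) (ω ^ e))
    (b : Ordinal.{u}) (k : ℕ) : ω ^ e * b ♯ ω ^ e * k = ω ^ e * (b + k) := by
  induction k with
  | zero => simp
  | succ k ih =>
    rw [Nat.cast_succ, ← omega0_opow_mul_nadd_omega0_opow hS, ← nadd_assoc, ih,
      omega0_opow_mul_nadd_omega0_opow hS, add_assoc]

end PrincipalOmega0Opow

theorem isPrincipal_nadd_omega0_opow (e : Ordinal.{u}) : IsPrincipal (· ♯ ·) (ω ^ e) := by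
  induction e using WellFoundedLT.induction with | ind e IH =>
  intro a b ha hb
  rcases eq_or_ne e 0 with rfl | he
  · simp_all
  obtain ⟨c₁, hc₁, m, ham⟩ := (lt_omega0_opow he).1 ha
  obtain ⟨c₂, hc₂, k, hbk⟩ := (lt_omega0_opow he).1 hb
  have hc : max c₁ c₂ < e := max_lt hc₁ hc₂
  have hle (c : Ordinal.{u}) (h : c ≤ max c₁ c₂) (n : ℕ) : ω ^ c * n ≤ ω ^ max c₁ c₂ * n :=
    mul_le_mul_left (opow_le_opow_right omega0_pos h) _
  calc a ♯ b < ω ^ max c₁ c₂ * m ♯ ω ^ max c₁ c₂ * k :=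
        nadd_lt_nadd (ham.trans_le (hle _ (le_max_left _ _) m))
          (hbk.trans_le (hle _ (le_max_right _ _) k))
    _ = ω ^ max c₁ c₂ * (m + k : ℕ) := by
        rw [omega0_opow_mul_nadd_omega0_opow_mul_natCast (IH _ hc), Nat.cast_add]
    _ < ω ^ e := opow_mul_lt_opow (natCast_lt_omega0 _) hc

theorem omega0_opow_mul_natCast_nmul_natCast (e : Ordinal.{u}) (c m : ℕ) :
    ω ^ e * c ⨳ m = ω ^ e * (c * m : ℕ) := by
  induction m with
  | zero => simp
  | succ m ih =>
    rw [Nat.cast_succ, nmul_add_one, ih,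
      omega0_opow_mul_nadd_omega0_opow_mul_natCast (isPrincipal_nadd_omega0_opow e),
      Nat.mul_succ, Nat.cast_add]

theorem exists_natCast_opow_eq_omega0_opow_mul {n : ℕ} (hn : 1 < n) (γ : Ordinal.{u}) :
    ∃ e : Ordinal.{u}, ∃ c : ℕ, (n : Ordinal.{u}) ^ γ = ω ^ e * c := by
  obtain ⟨k, hk⟩ := lt_omega0.1 (mod_lt γ omega0_ne_zero)
  refine ⟨γ / ω, n ^ k, ?_⟩
  conv_lhs => rw [← div_add_mod γ ω, hk]
  rw [opow_add, opow_mul, natCast_opow_omega0 hn, opow_natCast, natCast_pow]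

theorem natCast_opow_nmul_natCast {n : ℕ} (hn : 1 < n) (γ : Ordinal.{u}) :
    (n : Ordinal.{u}) ^ γ ⨳ n = n ^ (γ + 1) := by
  obtain ⟨e, c, h⟩ := exists_natCast_opow_eq_omega0_opow_mul hn γ
  rw [opow_add_one, h, omega0_opow_mul_natCast_nmul_natCast]
  push_cast
  rw [mul_assoc]

end Ordinal

theorem iterNmul_zero (α : Ordinal) : iterNmul α 0 = 1 :=
  limitRecOn_zero _ _ _

theorem iterNmul_add_one (α β : Ordinal) : iterNmul α (β + 1) = iterNmul α β ⨳ α :=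
  limitRecOn_add_one _ _ _ _

theorem iterNmul_of_isSuccLimit (α : Ordinal) {β : Ordinal} (hβ : IsSuccLimit β) :
    iterNmul α β = ⨆ γ : Set.Iio β, iterNmul α γ.1 :=
  limitRecOn_limit _ _ _ _ hβ

/-- If `n` is a natural number with `2 ≤ n`, then for every ordinal `γ` the
`γ`-fold iterated Hessenberg product of `n` equals the ordinal power `n^γ`. -/
theorem iterNmul_nat (n : ℕ) (hn : 2 ≤ n) (γ : Ordinal) :
    iterNmul (n : Ordinal) γ = (n : Ordinal) ^ γ := by
  induction γ using Ordinal.limitRecOn with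
  | zero => rw [iterNmul_zero, opow_zero]
  | add_one β IH => rw [iterNmul_add_one, IH, natCast_opow_nmul_natCast hn]
  | limit l hl IH =>
    rw [iterNmul_of_isSuccLimit _ hl, opow_limit (by positivity) hl]
    exact iSup_congr fun β ↦ IH β.1 β.2
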